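/- arXiv:2203.12538 — 2 statements merged into one kernel-verified Lean document; each statement's English description precedes it below -/
import Mathlib

section
/- In the logistic-selection Gaussian linear model with mean-zero covariates and known propensity score π(x) = σ(ηᵀx), define for each i the random vectors Z¹_i = ((π(X_i) − W_i)/π(X_i)) X_i and Z⁰_i = ((π(X_i) − W_i)/(1 − π(X_i))) X_i, which have mean zero and finite second moments, and let Σ_{Z^w} = E[Z^w_1 (Z^w_1)ᵀ]. Let A_0, A_1 be random vectors in ℝ^d, independent of the data {(X_i, W_i, ε_i)}_{i=1}^n, with E‖A_w‖² < ∞, E[A_w] = β_w, covariance matrices V_w, and Cov((A_1)_j, (A_0)_k) = 0 for all j, k. Define the remainder R = (1/n) ∑_{i=1}^n [ (A_1 − β_1)ᵀ Z¹_i + (A_0 − β_0)ᵀ Z⁰_i ] and the oracle AIPW estimator θ̂_or = (1/n) ∑_{i=1}^n [ (β_1 − β_0)ᵀ X_i + ((W_i − π(X_i))/(π(X_i)(1 − π(X_i)))) (Y_i − β_{W_i}ᵀ X_i) ]. Then: (i) E[R] = 0; (ii) Var(√n · R) = trace(V_1 Σ_{Z¹}) + trace(V_0 Σ_{Z⁰});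 and (iii) E[R · θ̂_or] = 0, so R and θ̂_or are uncorrelated. -/
open MeasureTheory ProbabilityTheory Matrix

/-- The logistic (sigmoid) function `σ(t) = 1 / (1 + e^{-t})`. -/
noncomputable def logistic (t : ℝ) : ℝ := (1 + Real.exp (-t))⁻¹

/-- The logistic-selection Gaussian linear model: i.i.d. triples `(X i, W i, ε i)`
with `X i ~ N(μX, S)`, `P(W i = 1 | X i = x) = σ(ηᵀ x)`, noise `ε i` of mean `0`
and variance `σ²` independent of `(X i, W i)`, and outcomes
`Y i = β_{W i}ᵀ X i + ε i`. -/
structure LogisticSelectionModel {Ω : Type*} [MeasurableSpace Ω] (P : Measure Ω)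
    (n d : ℕ) (S : Matrix (Fin d) (Fin d) ℝ) (μX η : Fin d → ℝ)
    (β : Fin 2 → Fin d → ℝ) (σ2 : ℝ)
    (X : Fin n → Ω → Fin d → ℝ) (W : Fin n → Ω → Fin 2) (ε : Fin n → Ω → ℝ)
    (Y : Fin n → Ω → ℝ) : Prop where
  prob : IsProbabilityMeasure P
  posdef : S.PosDef
  sigma_pos : 0 < σ2
  measX : ∀ i, Measurable (X i)
  measW : ∀ i, Measurable (W i)
  measEps : ∀ i, Measurable (ε i)
  /-- the triples `(X i, W i, ε i)` are independent across `i` … -/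
  indep : iIndepFun (fun i ω => (X i ω, W i ω, ε i ω)) P
  /-- … and identically distributed -/
  ident : ∀ i j, Measure.map (fun ω => (X i ω, W i ω, ε i ω)) P
      = Measure.map (fun ω => (X j ω, W j ω, ε j ω)) P
  /-- `X i ~ N(μX, S)`: every linear functional of `X i` is real Gaussian with
  mean `aᵀ μX` and variance `aᵀ S a` -/
  gauss : ∀ i (a : Fin d → ℝ),
      Measure.map (fun ω => ∑ k, a k * X i ω k) P
        = gaussianReal (∑ k, a k * μX k) (a ⬝ᵥ S.mulVec a).toNNReal
  /-- `P(W i = 1 | X i) = σ(ηᵀ X i)` -/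
  propScore : ∀ i,
      (P[(fun ω => if W i ω = 1 then (1 : ℝ) else 0) |
          MeasurableSpace.comap (X i) inferInstance])
        =ᵐ[P] fun ω => logistic (∑ k, η k * X i ω k)
  /-- `ε i` is independent of `(X i, W i)` -/
  indepEps : ∀ i, IndepFun (fun ω => (X i ω, W i ω)) (ε i) P
  epsL2 : ∀ i, MemLp (ε i) 2 P
  epsMean : ∀ i, ∫ ω, ε i ω ∂P = 0
  epsVar : ∀ i, ∫ ω, (ε i ω) ^ 2 ∂P = σ2
  Ydef : ∀ i ω, Y i ω = (∑ k, β (W i ω) k * X i ω k) + ε i ω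

variable {Ω : Type*} [MeasurableSpace Ω]

/-- The number of indices `i` with `W i = w`. -/
def Ncount {n : ℕ} (W : Fin n → Ω → Fin 2) (w : Fin 2) (ω : Ω) : ℕ :=
  (Finset.univ.filter fun i => W i ω = w).card

/-- The arm-`w` Gram matrix `∑_{i : W i = w} X i X iᵀ`. -/
noncomputable def gram {n d : ℕ} (X : Fin n → Ω → Fin d → ℝ)
    (W : Fin n → Ω → Fin 2) (w : Fin 2) (ω : Ω) : Matrix (Fin d) (Fin d) ℝ :=
  ∑ i, if W i ω = w then vecMulVec (X i ω) (X i ω) else 0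

/-- The arm-`w` ordinary least squares estimator
`β̂_w = (∑_{i : W i = w} X i X iᵀ)⁻¹ ∑_{i : W i = w} Y i X i`. -/
noncomputable def olsEst {n d : ℕ} (X : Fin n → Ω → Fin d → ℝ)
    (W : Fin n → Ω → Fin 2) (Y : Fin n → Ω → ℝ) (w : Fin 2) (ω : Ω) :
    Fin d → ℝ :=
  (gram X W w ω)⁻¹.mulVec (∑ i, if W i ω = w then (fun k => Y i ω * X i ω k) else 0)

/-- Conditional expectation of `Z` given the event `G`: `E[Z 1_G] / P(G)`. -/
noncomputable def condExpE (P : Measure Ω) (G : Set Ω) (Z : Ω → ℝ) : ℝ :=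
  (∫ ω in G, Z ω ∂P) / (P G).toReal

/-- The centered weighted covariate vector
`Z^w_i = ((π(X i) - W i) / π(X i)) X i` for `w = 1` and
`Z^w_i = ((π(X i) - W i) / (1 - π(X i))) X i` for `w = 0`,
where `π(x) = σ(ηᵀ x)` is the (known) propensity score. -/
noncomputable def Zvec {n d : ℕ} (η : Fin d → ℝ) (X : Fin n → Ω → Fin d → ℝ)
    (W : Fin n → Ω → Fin 2) (w : Fin 2) (i : Fin n) (ω : Ω) : Fin d → ℝ :=
  fun k => (logistic (∑ l, η l * X i ω l) - ((W i ω).val : ℝ)) /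
      (if w = 1 then logistic (∑ l, η l * X i ω l)
        else 1 - logistic (∑ l, η l * X i ω l)) * X i ω k

/-- The remainder `R = n⁻¹ ∑ i ((A 1 - β 1)ᵀ Z¹ i + (A 0 - β 0)ᵀ Z⁰ i)`. -/
noncomputable def Rrem {n d : ℕ} (η : Fin d → ℝ) (X : Fin n → Ω → Fin d → ℝ)
    (W : Fin n → Ω → Fin 2) (A : Fin 2 → Ω → Fin d → ℝ)
    (β : Fin 2 → Fin d → ℝ) (ω : Ω) : ℝ :=
  (n : ℝ)⁻¹ * ∑ i, ((∑ k, (A 1 ω k - β 1 k) * Zvec η X W 1 i ω k)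
    + ∑ k, (A 0 ω k - β 0 k) * Zvec η X W 0 i ω k)

/-- The oracle AIPW estimator
`θ̂ = n⁻¹ ∑ i ((β 1 - β 0)ᵀ X i + ((W i - π(X i))/(π(X i)(1 - π(X i)))) (Y i - β_{W i}ᵀ X i))`. -/
noncomputable def aipwOracle {n d : ℕ} (η : Fin d → ℝ)
    (X : Fin n → Ω → Fin d → ℝ) (W : Fin n → Ω → Fin 2) (Y : Fin n → Ω → ℝ)
    (β : Fin 2 → Fin d → ℝ) (ω : Ω) : ℝ :=
  (n : ℝ)⁻¹ * ∑ i, ((∑ k, (β 1 k - β 0 k) * X i ω k)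
    + (((W i ω).val : ℝ) - logistic (∑ l, η l * X i ω l)) /
        (logistic (∑ l, η l * X i ω l) * (1 - logistic (∑ l, η l * X i ω l)))
      * (Y i ω - ∑ k, β (W i ω) k * X i ω k))


/-!
Write `R = n⁻¹ ∑_{w,j} (A w j - β w j) S^w_j` with `S^w_j = ∑ i, (Z^w_i)_j`. The coefficients
`A w j - β w j` are centred and independent of the data, while `S^w_j` and `θ̂_or` are functions
of the data. Hence `R` is orthogonal to every square-integrable function of the data, which gives
(i) and (iii), and `E[R²] = n⁻² ∑_{p,q} Cov(A_p, A_q) E[S_p S_q]`. The `Z_i` are i.i.d. and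
centred, because `π(X)` is the conditional mean of `W` given `X`; so `E[S_p S_q] = n E[Z_p Z_q]`,
and the vanishing cross-covariance of `A 0` and `A 1` leaves the two trace terms of (ii).
All the moments exist because `(π (1 - π))⁻¹ = e^{ηᵀX} + e^{-ηᵀX} + 2` and every linear
functional of `X` is Gaussian.
-/

open Real
open scoped NNReal ENNReal

lemma logistic_pos (t : ℝ) : 0 < logistic t := sigmoid_pos t

lemma logistic_lt_one (t : ℝ) : logistic t < 1 := sigmoid_lt_one t

lemma measurable_logistic : Measurable logistic := continuous_sigmoid.measurable

lemma inv_logistic_mul_one_sub_logistic (t : ℝ) :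
    (logistic t * (1 - logistic t))⁻¹ = exp t + exp (-t) + 2 := by
  have h : 1 - logistic t = (1 + exp t)⁻¹ := by
    rw [show logistic t = sigmoid t from rfl, ← sigmoid_neg, sigmoid, neg_neg]
  rw [h, logistic, ← mul_inv, inv_inv, mul_add, add_mul, add_mul, ← exp_add]
  simp only [neg_add_cancel, exp_zero]
  ring

lemma inv_ite_logistic_le (t : ℝ) (w : Fin 2) :
    (if w = 1 then logistic t else 1 - logistic t)⁻¹ ≤ (logistic t * (1 - logistic t))⁻¹ := by
  have h0 := logistic_pos t
  have h1 := logistic_lt_one t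
  split_ifs <;> exact inv_anti₀ (by nlinarith) (by nlinarith)

lemma abs_div_le_of_abs_le_one {a b c : ℝ} (ha : |a| ≤ 1) (hb : 0 < b) (hbc : b⁻¹ ≤ c) :
    |a / b| ≤ c := by
  rw [abs_div, abs_of_pos hb, div_eq_mul_inv]
  calc |a| * b⁻¹ ≤ 1 * b⁻¹ := by gcongr
    _ ≤ c := by rwa [one_mul]

lemma ite_logistic_pos (t : ℝ) (w : Fin 2) :
    0 < if w = 1 then logistic t else 1 - logistic t := by
  split_ifs
  exacts [logistic_pos t, sub_pos.2 (logistic_lt_one t)]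

lemma abs_logistic_sub_val_le_one (t : ℝ) (w : Fin 2) : |logistic t - (w.val : ℝ)| ≤ 1 := by
  have h0 := logistic_pos t
  have h1 := logistic_lt_one t
  have hw : (w.val : ℝ) = 0 ∨ (w.val : ℝ) = 1 := by fin_cases w <;> simp
  rcases hw with hw | hw <;> rw [hw, abs_le] <;> constructor <;> linarith

instance ENNReal.holderTriple_four_four_two : ENNReal.HolderTriple 4 4 2 := ⟨by
  rw [← two_mul, show (4 : ℝ≥0∞) = 2 * 2 by norm_num, ENNReal.mul_inv (by simp) (by simp),
    ← mul_assoc, ENNReal.mul_inv_cancel (by simp) (by simp), one_mul]⟩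

lemma memLp_exp_mul_gaussianReal (μ : ℝ) (v : ℝ≥0) (c : ℝ) (p : ℝ≥0) :
    MemLp (fun x => exp (c * x)) p (gaussianReal μ v) := by
  have hmeas : AEStronglyMeasurable (fun x => exp (c * x)) (gaussianReal μ v) := by fun_prop
  rcases eq_or_ne p 0 with rfl | hp
  · exact memLp_zero_iff_aestronglyMeasurable.2 hmeas
  refine (integrable_norm_rpow_iff hmeas (by simpa using hp) (by simp)).1 ?_
  simp_rw [norm_of_nonneg (exp_pos _).le, ← exp_mul, ENNReal.coe_toReal, mul_comm _ (p : ℝ),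
    ← mul_assoc]
  exact integrable_exp_mul_gaussianReal _

theorem ProbabilityTheory.IndepFun.memLp_two_mul {μ : Measure Ω} {f g : Ω → ℝ}
    (hfg : IndepFun f g μ) (hf : MemLp f 2 μ) (hg : MemLp g 2 μ) : MemLp (f * g) 2 μ := by
  refine (memLp_two_iff_integrable_sq (hf.1.mul hg.1)).2 ?_
  have hsq : IndepFun (fun ω => f ω ^ 2) (fun ω => g ω ^ 2) μ :=
    hfg.comp (measurable_id.pow_const 2) (measurable_id.pow_const 2)
  refine (hsq.integrable_mul hf.integrable_sq hg.integrable_sq).congr (ae_of_all _ fun ω => ?_)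
  simp [mul_pow]

theorem integral_mul_condExp {α : Type*} {m m₀ : MeasurableSpace α} {μ : Measure α}
    (hm : m ≤ m₀) [SigmaFinite (μ.trim hm)] {f g : α → ℝ} (hf : StronglyMeasurable[m] f)
    (hfg : Integrable (f * g) μ) (hg : Integrable g μ) :
    ∫ ω, f ω * μ[g|m] ω ∂μ = ∫ ω, f ω * g ω ∂μ := by
  symm
  rw [← integral_condExp hm]
  exact integral_congr_ae (condExp_mul_of_stronglyMeasurable_left hf hfg hg)

theorem integral_sum_mul_of_indepFun {ι α β : Type*} [MeasurableSpace α]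
    [MeasurableSpace β] [Fintype ι] {μ : Measure Ω} {F : Ω → α} {G : Ω → β}
    (hFG : IndepFun F G μ) {f : ι → α → ℝ} {g : ι → β → ℝ}
    (hf : ∀ p, Measurable (f p)) (hg : ∀ p, Measurable (g p))
    (hfi : ∀ p, Integrable (fun ω => f p (F ω)) μ) (hgi : ∀ p, Integrable (fun ω => g p (G ω)) μ) :
    ∫ ω, ∑ p, f p (F ω) * g p (G ω) ∂μ = ∑ p, (∫ ω, f p (F ω) ∂μ) * ∫ ω, g p (G ω) ∂μ := by
  have hind : ∀ p, IndepFun (fun ω => f p (F ω)) (fun ω => g p (G ω)) μ :=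
    fun p => hFG.comp (hf p) (hg p)
  have hint : ∀ p, Integrable (fun ω => f p (F ω) * g p (G ω)) μ :=
    fun p => (hind p).integrable_mul (hfi p) (hgi p)
  rw [integral_finsetSum _ fun p _ => hint p]
  exact Finset.sum_congr rfl fun p _ =>
    (hind p).integral_fun_mul_eq_mul_integral (hfi p).1 (hgi p).1

theorem integral_sum_mul_sq_of_indepFun {ι α β : Type*} [MeasurableSpace α]
    [MeasurableSpace β] [Fintype ι] {μ : Measure Ω} {F : Ω → α} {G : Ω → β}
    (hFG : IndepFun F G μ) {f : ι → α → ℝ} {g : ι → β → ℝ}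
    (hf : ∀ p, Measurable (f p)) (hg : ∀ p, Measurable (g p))
    (hfL2 : ∀ p, MemLp (fun ω => f p (F ω)) 2 μ) (hgL2 : ∀ p, MemLp (fun ω => g p (G ω)) 2 μ) :
    ∫ ω, (∑ p, f p (F ω) * g p (G ω)) ^ 2 ∂μ
      = ∑ p, ∑ q, (∫ ω, f p (F ω) * f q (F ω) ∂μ) * ∫ ω, g p (G ω) * g q (G ω) ∂μ := by
  have h := integral_sum_mul_of_indepFun hFG (f := fun (pq : ι × ι) x => f pq.1 x * f pq.2 x)
    (g := fun (pq : ι × ι) y => g pq.1 y * g pq.2 y) (fun pq => (hf pq.1).mul (hf pq.2))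
    (fun pq => (hg pq.1).mul (hg pq.2)) (fun pq => (hfL2 pq.1).integrable_mul (hfL2 pq.2))
    (fun pq => (hgL2 pq.1).integrable_mul (hgL2 pq.2))
  rw [← Fintype.sum_prod_type', ← h]
  congr 1 with ω
  rw [sq, Finset.sum_mul_sum, ← Fintype.sum_prod_type']
  exact Finset.sum_congr rfl fun pq _ => by ring

theorem integral_sum_mul_sum_of_iIndepFun {ι β : Type*} [MeasurableSpace β]
    [Fintype ι] {μ : Measure Ω} {D : ι → Ω → β} (hD : ∀ i, Measurable (D i))
    (hind : iIndepFun D μ) (hident : ∀ i j, μ.map (D i) = μ.map (D j))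
    {f g : β → ℝ} (hf : Measurable f) (hg : Measurable g)
    (hfL2 : ∀ i, MemLp (fun ω => f (D i ω)) 2 μ) (hgL2 : ∀ i, MemLp (fun ω => g (D i ω)) 2 μ)
    (hf0 : ∀ i, ∫ ω, f (D i ω) ∂μ = 0) (i₀ : ι) :
    ∫ ω, (∑ i, f (D i ω)) * (∑ i, g (D i ω)) ∂μ
      = Fintype.card ι * ∫ ω, f (D i₀ ω) * g (D i₀ ω) ∂μ := by
  classical
  set c := ∫ ω, f (D i₀ ω) * g (D i₀ ω) ∂μ
  have hdiag : ∀ i, ∫ ω, f (D i ω) * g (D i ω) ∂μ = c := by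
    intro i
    have hfg : Measurable fun b => f b * g b := hf.mul hg
    rw [← integral_map (hD i).aemeasurable hfg.aestronglyMeasurable, hident i i₀,
      integral_map (hD i₀).aemeasurable hfg.aestronglyMeasurable]
  have hterm : ∀ i j, ∫ ω, f (D i ω) * g (D j ω) ∂μ
      = if i = j then c else 0 := by
    intro i j
    split_ifs with hij
    · subst hij; exact hdiag i
    · have hij' : IndepFun (fun ω => f (D i ω)) (fun ω => g (D j ω)) μ :=
        (hind.indepFun hij).comp hf hg
      rw [hij'.integral_fun_mul_eq_mul_integral (hfL2 i).1 (hgL2 j).1, hf0, zero_mul]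
  have hint : ∀ i j, Integrable (fun ω => f (D i ω) * g (D j ω)) μ :=
    fun i j => (hfL2 i).integrable_mul (hgL2 j)
  simp_rw [Finset.sum_mul_sum]
  rw [integral_finsetSum _ fun i _ => integrable_finsetSum _ fun j _ => hint i j]
  have hrow : ∀ i, ∫ ω, ∑ j, f (D i ω) * g (D j ω) ∂μ = c := by
    intro i
    rw [integral_finsetSum _ fun j _ => hint i j]
    simp [hterm]
  simp [hrow]

section Observation

variable {d : ℕ}

/-- The values `(X i ω, W i ω, ε i ω)` of one observation. -/
abbrev Obs (d : ℕ) := (Fin d → ℝ) × Fin 2 × ℝ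

/-- `Zvec η X W w i ω j` is by definition `zObs η w j (X i ω, W i ω, ε i ω)`. -/
noncomputable def zObs (η : Fin d → ℝ) (w : Fin 2) (j : Fin d) (o : Obs d) : ℝ :=
  (logistic (∑ l, η l * o.1 l) - (o.2.1.val : ℝ)) /
    (if w = 1 then logistic (∑ l, η l * o.1 l) else 1 - logistic (∑ l, η l * o.1 l)) * o.1 j

noncomputable def aipwWeight (η : Fin d → ℝ) (x : Fin d → ℝ) (w : Fin 2) : ℝ :=
  ((w.val : ℝ) - logistic (∑ l, η l * x l)) /
    (logistic (∑ l, η l * x l) * (1 - logistic (∑ l, η l * x l)))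

/-- The summand of `aipwOracle` for one observation, with `Y - β_Wᵀ X` replaced by the noise. -/
noncomputable def aipwObs (η : Fin d → ℝ) (β : Fin 2 → Fin d → ℝ) (o : Obs d) : ℝ :=
  ∑ k, (β 1 k - β 0 k) * o.1 k + aipwWeight η o.1 o.2.1 * o.2.2

lemma measurable_logistic_linear (η : Fin d → ℝ) :
    Measurable fun x : Fin d → ℝ => logistic (∑ l, η l * x l) :=
  measurable_logistic.comp (by fun_prop)

lemma measurable_val_fin_two : Measurable fun w : Fin 2 => (w.val : ℝ) :=
  measurable_of_countable _

lemma measurable_zObs (η : Fin d → ℝ) (w : Fin 2) (j : Fin d) : Measurable (zObs η w j) := by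
  have hπ : Measurable fun o : Obs d => logistic (∑ l, η l * o.1 l) :=
    (measurable_logistic_linear η).comp measurable_fst
  refine ((hπ.sub (measurable_val_fin_two.comp (measurable_fst.comp measurable_snd))).div ?_).mul
    ((measurable_pi_apply j).comp measurable_fst)
  split_ifs
  exacts [hπ, measurable_const.sub hπ]

lemma measurable_aipwWeight (η : Fin d → ℝ) :
    Measurable fun q : (Fin d → ℝ) × Fin 2 => aipwWeight η q.1 q.2 := by
  have hπ : Measurable fun q : (Fin d → ℝ) × Fin 2 => logistic (∑ l, η l * q.1 l) :=
    (measurable_logistic_linear η).comp measurable_fst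
  exact ((measurable_val_fin_two.comp measurable_snd).sub hπ).div (hπ.mul (measurable_const.sub hπ))

lemma measurable_aipwObs (η : Fin d → ℝ) (β : Fin 2 → Fin d → ℝ) :
    Measurable (aipwObs η β) :=
  (Finset.measurable_sum _ fun k _ => measurable_const.mul ((measurable_pi_apply k).comp
    measurable_fst)).add (((measurable_aipwWeight η).comp (measurable_fst.prodMk
      (measurable_fst.comp measurable_snd))).mul (measurable_snd.comp measurable_snd))

lemma measurable_sum_zObs {n : ℕ} (η : Fin d → ℝ) (w : Fin 2) (j : Fin d) :
    Measurable fun D : Fin n → Obs d => ∑ i, zObs η w j (D i) :=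
  Finset.measurable_sum _ fun i _ => (measurable_zObs η w j).comp (measurable_pi_apply i)

lemma abs_zObs_le (η : Fin d → ℝ) (w : Fin 2) (j : Fin d) (o : Obs d) :
    |zObs η w j o| ≤ (logistic (∑ l, η l * o.1 l) * (1 - logistic (∑ l, η l * o.1 l)))⁻¹
      * |o.1 j| := by
  rw [zObs, abs_mul]
  gcongr
  exact abs_div_le_of_abs_le_one (abs_logistic_sub_val_le_one _ _) (ite_logistic_pos _ w)
    (inv_ite_logistic_le _ w)

lemma abs_aipwWeight_le (η x : Fin d → ℝ) (w : Fin 2) :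
    |aipwWeight η x w| ≤ (logistic (∑ l, η l * x l) * (1 - logistic (∑ l, η l * x l)))⁻¹ := by
  have h0 := logistic_pos (∑ l, η l * x l)
  have h1 := logistic_lt_one (∑ l, η l * x l)
  refine abs_div_le_of_abs_le_one ?_ (by nlinarith) le_rfl
  rw [abs_sub_comm]
  exact abs_logistic_sub_val_le_one _ w

end Observation

lemma sum_ite_mul_eq_trace {d : ℕ} (V : Fin 2 → Matrix (Fin d) (Fin d) ℝ)
    (C : Fin 2 × Fin d → Fin 2 × Fin d → ℝ) (hC : ∀ p q, C p q = C q p) :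
    ∑ p, ∑ q, (if p.1 = q.1 then V p.1 p.2 q.2 else 0) * C p q
      = (V 1 * Matrix.of fun j k => C (1, j) (1, k)).trace
        + (V 0 * Matrix.of fun j k => C (0, j) (0, k)).trace := by
  simp only [Matrix.trace, Matrix.diag_apply, Matrix.mul_apply, Matrix.of_apply,
    Fintype.sum_prod_type, Fin.sum_univ_two, Fin.isValue, ↓reduceIte, zero_ne_one, one_ne_zero,
    zero_mul, Finset.sum_const_zero, add_zero, zero_add]
  rw [add_comm]
  -- `hC` is a permutation lemma, so `simp` brings both sides to the same orientation.
  simp only [hC]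

lemma Rrem_eq_sum {Ω : Type*} {n d : ℕ} (η : Fin d → ℝ) (X : Fin n → Ω → Fin d → ℝ)
    (W : Fin n → Ω → Fin 2) (ε : Fin n → Ω → ℝ) (A : Fin 2 → Ω → Fin d → ℝ)
    (β : Fin 2 → Fin d → ℝ) (ω : Ω) :
    Rrem η X W A β ω = (n : ℝ)⁻¹ * ∑ p : Fin 2 × Fin d,
      (A p.1 ω p.2 - β p.1 p.2) * ∑ i, zObs η p.1 p.2 (X i ω, W i ω, ε i ω) := by
  rw [Rrem, Fintype.sum_prod_type, Fin.sum_univ_two, Finset.sum_add_distrib, add_comm]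
  congr 2 <;> (rw [Finset.sum_comm]; simp only [Finset.mul_sum]; rfl)

lemma indepFun_fin_two_of_prod {P : Measure Ω} {E F : Type*} [MeasurableSpace E] [MeasurableSpace F]
    {A : Fin 2 → Ω → E} {G : Ω → F} (hAindep : IndepFun (fun ω => (A 0 ω, A 1 ω)) G P) :
    IndepFun (fun ω w => A w ω) G P := by
  have hpair : Measurable fun x : E × E => ![x.1, x.2] :=
    measurable_pi_iff.2 fun w => by fin_cases w; exacts [measurable_fst, measurable_snd]
  have hA : (fun ω w => A w ω) = (fun x => ![x.1, x.2]) ∘ fun ω => (A 0 ω, A 1 ω) := by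
    ext ω w
    fin_cases w <;> rfl
  rw [hA]
  exact hAindep.comp hpair measurable_id

lemma integral_centered_mul_centered {P : Measure Ω} {d : ℕ} {A : Fin 2 → Ω → Fin d → ℝ}
    {β : Fin 2 → Fin d → ℝ} [IsProbabilityMeasure P]
    (hAL2 : ∀ w j, MemLp (fun ω => A w ω j) 2 P) (hAmean : ∀ w j, ∫ ω, A w ω j ∂P = β w j)
    {V : Fin 2 → Matrix (Fin d) (Fin d) ℝ}
    (hV : ∀ w j k, V w j k = ∫ ω, A w ω j * A w ω k ∂P - β w j * β w k)
    (hAcross : ∀ j k, ∫ ω, A 1 ω j * A 0 ω k ∂P = β 1 j * β 0 k) (w w' : Fin 2) (j k : Fin d) :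
    ∫ ω, (A w ω j - β w j) * (A w' ω k - β w' k) ∂P = if w = w' then V w j k else 0 := by
  have hcov : ∀ w w' j k, ∫ ω, (A w ω j - β w j) * (A w' ω k - β w' k) ∂P
      = ∫ ω, A w ω j * A w' ω k ∂P - β w j * β w' k := by
    intro w w' j k
    simpa [covariance, hAmean] using covariance_eq_sub (hAL2 w j) (hAL2 w' k)
  rw [hcov]
  fin_cases w <;> fin_cases w'
  · simp [hV]
  · simp only [Fin.zero_eta, Fin.isValue, Fin.mk_one, zero_ne_one, ↓reduceIte]
    rw [integral_congr_ae (ae_of_all _ fun ω => mul_comm _ _), hAcross]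
    ring
  · simp [hAcross]
  · simp [hV]

namespace LogisticSelectionModel

variable {P : Measure Ω} {n d : ℕ} {S : Matrix (Fin d) (Fin d) ℝ} {μX η : Fin d → ℝ}
  {β : Fin 2 → Fin d → ℝ} {σ2 : ℝ} {X : Fin n → Ω → Fin d → ℝ} {W : Fin n → Ω → Fin 2}
  {ε : Fin n → Ω → ℝ} {Y : Fin n → Ω → ℝ} {A : Fin 2 → Ω → Fin d → ℝ}

lemma measurable_obs (model : LogisticSelectionModel P n d S μX η β σ2 X W ε Y) (i : Fin n) :
    Measurable fun ω => (X i ω, W i ω, ε i ω) :=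
  (model.measX i).prodMk ((model.measW i).prodMk (model.measEps i))

lemma memLp_of_map_gaussianReal (model : LogisticSelectionModel P n d S μX η β σ2 X W ε Y)
    (i : Fin n) (a : Fin d → ℝ) {g : ℝ → ℝ} (hg : Measurable g) {p : ℝ≥0∞}
    (hgp : ∀ μ v, MemLp g p (gaussianReal μ v)) :
    MemLp (fun ω => g (∑ l, a l * X i ω l)) p P := by
  have hm : Measurable fun ω => ∑ l, a l * X i ω l :=
    Finset.measurable_sum _ fun l _ => measurable_const.mul ((model.measX i).eval)
  exact (memLp_map_measure_iff hg.aestronglyMeasurable hm.aemeasurable).1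
    (model.gauss i a ▸ hgp _ _)

lemma memLp_coord (model : LogisticSelectionModel P n d S μX η β σ2 X W ε Y) (i : Fin n)
    (j : Fin d) {p : ℝ≥0∞} (hp : p ≠ ∞) : MemLp (fun ω => X i ω j) p P := by
  have h := model.memLp_of_map_gaussianReal i (Pi.single j 1) measurable_id
    fun μ v => memLp_id_gaussianReal' p hp
  simpa [Pi.single_apply] using h

lemma memLp_inv_logistic_mul_one_sub_logistic
    (model : LogisticSelectionModel P n d S μX η β σ2 X W ε Y) (i : Fin n)
    {p : ℝ≥0∞} (hp : p ≠ ∞) :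
    MemLp (fun ω => (logistic (∑ l, η l * X i ω l) * (1 - logistic (∑ l, η l * X i ω l)))⁻¹)
      p P := by
  have := model.prob
  have hexp : ∀ c : ℝ, MemLp (fun ω => exp (c * ∑ l, η l * X i ω l)) p P := fun c =>
    model.memLp_of_map_gaussianReal i η (g := fun x => exp (c * x)) (by fun_prop) fun μ v => by
      simpa [ENNReal.coe_toNNReal hp] using memLp_exp_mul_gaussianReal μ v c p.toNNReal
  simp_rw [inv_logistic_mul_one_sub_logistic]
  exact (((hexp 1).add (hexp (-1))).add (memLp_const 2)).ae_eq (ae_of_all _ fun ω => by simp)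

lemma memLp_Zvec (model : LogisticSelectionModel P n d S μX η β σ2 X W ε Y) (w : Fin 2)
    (i : Fin n) (j : Fin d) : MemLp (fun ω => Zvec η X W w i ω j) 2 P := by
  have hbound := (model.memLp_coord i j (p := 4) (by simp)).mul (r := 2)
    (model.memLp_inv_logistic_mul_one_sub_logistic i (p := 4) (by simp))
  refine hbound.of_le ((measurable_zObs η w j).comp (model.measurable_obs i)).aestronglyMeasurable
    (ae_of_all _ fun ω => ?_)
  have h0 := logistic_pos (∑ l, η l * X i ω l)
  have h1 := logistic_lt_one (∑ l, η l * X i ω l)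
  rw [Real.norm_eq_abs, Real.norm_eq_abs, Pi.mul_apply, abs_mul,
    abs_of_pos (inv_pos.2 (mul_pos h0 (sub_pos.2 h1)))]
  exact abs_zObs_le η w j (X i ω, W i ω, ε i ω)

theorem integral_mul_logistic_sub_val
    (model : LogisticSelectionModel P n d S μX η β σ2 X W ε Y) (i : Fin n)
    {f : (Fin d → ℝ) → ℝ} (hf : Measurable f) (hfX : Integrable (fun ω => f (X i ω)) P) :
    ∫ ω, f (X i ω) * (logistic (∑ l, η l * X i ω l) - ((W i ω).val : ℝ)) ∂P = 0 := by
  have := model.prob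
  set treated : Ω → ℝ := fun ω => if W i ω = 1 then 1 else 0
  have htreated : ∀ ω, ‖treated ω‖ ≤ 1 := fun ω => by
    simp only [treated]; split_ifs <;> simp
  have htreated_meas : Measurable treated :=
    (measurable_of_countable fun v : Fin 2 => if v = 1 then (1 : ℝ) else 0).comp (model.measW i)
  have hprop : ∀ ω, ‖logistic (∑ l, η l * X i ω l)‖ ≤ 1 := fun ω => by
    rw [Real.norm_eq_abs, abs_of_pos (logistic_pos _)]; exact (logistic_lt_one _).le
  have hfprop : Integrable (fun ω => f (X i ω) * logistic (∑ l, η l * X i ω l)) P :=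
    hfX.mul_bdd ((measurable_logistic_linear η).comp (model.measX i)).aestronglyMeasurable
      (ae_of_all _ hprop)
  have hftreated : Integrable (fun ω => f (X i ω) * treated ω) P :=
    hfX.mul_bdd htreated_meas.aestronglyMeasurable (ae_of_all _ htreated)
  have htower : ∫ ω, f (X i ω) * treated ω ∂P
      = ∫ ω, f (X i ω) * logistic (∑ l, η l * X i ω l) ∂P := by
    have hfX_meas : StronglyMeasurable[MeasurableSpace.comap (X i) inferInstance]
        (fun ω => f (X i ω)) := (hf.comp (comap_measurable (X i))).stronglyMeasurable
    rw [← integral_mul_condExp (model.measX i).comap_le hfX_meas hftreated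
      ((integrable_const (1 : ℝ)).mono' htreated_meas.aestronglyMeasurable
        (ae_of_all _ htreated))]
    exact integral_congr_ae ((model.propScore i).mono fun ω h => congrArg (f (X i ω) * ·) h)
  have hval : ∀ ω, ((W i ω).val : ℝ) = treated ω := fun ω => by
    simp only [treated]
    generalize W i ω = v
    fin_cases v <;> simp
  simp_rw [hval, mul_sub]
  rw [integral_sub hfprop hftreated, htower, sub_self]

lemma integral_Zvec (model : LogisticSelectionModel P n d S μX η β σ2 X W ε Y) (w : Fin 2)
    (i : Fin n) (j : Fin d) : ∫ ω, Zvec η X W w i ω j ∂P = 0 := by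
  set f : (Fin d → ℝ) → ℝ := fun x =>
    (if w = 1 then logistic (∑ l, η l * x l) else 1 - logistic (∑ l, η l * x l))⁻¹ * x j
  have hf : Measurable f := by
    refine Measurable.mul ?_ (measurable_pi_apply j)
    split_ifs
    exacts [(measurable_logistic_linear η).inv,
      (measurable_const.sub (measurable_logistic_linear η)).inv]
  have hfX : Integrable (fun ω => f (X i ω)) P := by
    refine ((model.memLp_inv_logistic_mul_one_sub_logistic i (p := 2) (by simp)).integrable_mul
      (model.memLp_coord i j (p := 2) (by simp)).norm).mono'
      (hf.comp (model.measX i)).aestronglyMeasurable (ae_of_all _ fun ω => ?_)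
    rw [Real.norm_eq_abs, abs_mul, abs_of_pos (inv_pos.2 (ite_logistic_pos _ w)), Pi.mul_apply,
      Real.norm_eq_abs]
    exact mul_le_mul_of_nonneg_right (inv_ite_logistic_le _ w) (abs_nonneg _)
  rw [← model.integral_mul_logistic_sub_val i hf hfX]
  congr 1 with ω
  simp only [Zvec, f]
  ring

lemma memLp_aipwObs (model : LogisticSelectionModel P n d S μX η β σ2 X W ε Y) (i : Fin n) :
    MemLp (fun ω => aipwObs η β (X i ω, W i ω, ε i ω)) 2 P := by
  have hlin : MemLp (fun ω => ∑ k, (β 1 k - β 0 k) * X i ω k) 2 P :=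
    memLp_finsetSum _ fun k _ => (model.memLp_coord i k (by simp)).const_mul _
  have hweight : MemLp (fun ω => aipwWeight η (X i ω) (W i ω)) 2 P := by
    refine (model.memLp_inv_logistic_mul_one_sub_logistic i (p := 2) (by simp)).of_le
      ((measurable_aipwWeight η).comp ((model.measX i).prodMk (model.measW i))).aestronglyMeasurable
      (ae_of_all _ fun ω => ?_)
    have h0 := logistic_pos (∑ l, η l * X i ω l)
    have h1 := logistic_lt_one (∑ l, η l * X i ω l)
    rw [Real.norm_eq_abs, Real.norm_eq_abs, abs_of_pos (inv_pos.2 (mul_pos h0 (sub_pos.2 h1)))]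
    exact abs_aipwWeight_le η _ _
  have hind : IndepFun (fun ω => aipwWeight η (X i ω) (W i ω)) (ε i) P :=
    (model.indepEps i).comp (measurable_aipwWeight η) measurable_id
  exact hlin.add (hind.memLp_two_mul hweight (model.epsL2 i))

lemma memLp_sum_zObs (model : LogisticSelectionModel P n d S μX η β σ2 X W ε Y) (w : Fin 2)
    (j : Fin d) : MemLp (fun ω => ∑ i, zObs η w j (X i ω, W i ω, ε i ω)) 2 P :=
  memLp_finsetSum _ fun i _ => model.memLp_Zvec w i j

theorem integral_Rrem_mul_eq_zero (model : LogisticSelectionModel P n d S μX η β σ2 X W ε Y)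
    (hAL2 : ∀ w j, MemLp (fun ω => A w ω j) 2 P)
    (hAindep : IndepFun (fun ω => (A 0 ω, A 1 ω)) (fun ω (i : Fin n) => (X i ω, W i ω, ε i ω)) P)
    (hAmean : ∀ w j, ∫ ω, A w ω j ∂P = β w j) {u : (Fin n → Obs d) → ℝ} (hu : Measurable u)
    (huL2 : MemLp (fun ω => u fun i => (X i ω, W i ω, ε i ω)) 2 P) :
    ∫ ω, Rrem η X W A β ω * u (fun i => (X i ω, W i ω, ε i ω)) ∂P = 0 := by
  have := model.prob
  have hcentered : ∀ p : Fin 2 × Fin d, ∫ ω, (A p.1 ω p.2 - β p.1 p.2) ∂P = 0 := fun p => by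
    rw [integral_sub ((hAL2 p.1 p.2).integrable one_le_two) (integrable_const _), hAmean]
    simp
  have key := integral_sum_mul_of_indepFun (indepFun_fin_two_of_prod hAindep)
    (f := fun (p : Fin 2 × Fin d) (a : Fin 2 → Fin d → ℝ) => a p.1 p.2 - β p.1 p.2)
    (g := fun p D => (∑ i, zObs η p.1 p.2 (D i)) * u D) (fun p => by fun_prop)
    (fun p => (measurable_sum_zObs η p.1 p.2).mul hu)
    (fun p => ((hAL2 p.1 p.2).integrable one_le_two).sub (integrable_const _))
    (fun p => (model.memLp_sum_zObs p.1 p.2).integrable_mul huL2)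
  simp_rw [Rrem_eq_sum η X W ε A β, mul_assoc, Finset.sum_mul, mul_assoc]
  rw [integral_const_mul, key]
  simp [hcentered]

theorem mul_integral_Rrem_sq (model : LogisticSelectionModel P n d S μX η β σ2 X W ε Y)
    (hn : 0 < n) (hAL2 : ∀ w j, MemLp (fun ω => A w ω j) 2 P)
    (hAindep : IndepFun (fun ω => (A 0 ω, A 1 ω)) (fun ω (i : Fin n) => (X i ω, W i ω, ε i ω)) P)
    (hAmean : ∀ w j, ∫ ω, A w ω j ∂P = β w j) {V : Fin 2 → Matrix (Fin d) (Fin d) ℝ}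
    (hV : ∀ w j k, V w j k = ∫ ω, A w ω j * A w ω k ∂P - β w j * β w k)
    (hAcross : ∀ j k, ∫ ω, A 1 ω j * A 0 ω k ∂P = β 1 j * β 0 k) :
    n * ∫ ω, Rrem η X W A β ω ^ 2 ∂P
      = (V 1 * Matrix.of (fun j k =>
            ∫ ω, Zvec η X W 1 ⟨0, hn⟩ ω j * Zvec η X W 1 ⟨0, hn⟩ ω k ∂P)).trace
        + (V 0 * Matrix.of (fun j k =>
            ∫ ω, Zvec η X W 0 ⟨0, hn⟩ ω j * Zvec η X W 0 ⟨0, hn⟩ ω k ∂P)).trace := by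
  have := model.prob
  set C : Fin 2 × Fin d → Fin 2 × Fin d → ℝ := fun p q =>
    ∫ ω, Zvec η X W p.1 ⟨0, hn⟩ ω p.2 * Zvec η X W q.1 ⟨0, hn⟩ ω q.2 ∂P
  have hSS : ∀ p q : Fin 2 × Fin d,
      ∫ ω, (∑ i, zObs η p.1 p.2 (X i ω, W i ω, ε i ω)) *
          ∑ i, zObs η q.1 q.2 (X i ω, W i ω, ε i ω) ∂P
        = n * C p q := fun p q => by
    have h := integral_sum_mul_sum_of_iIndepFun model.measurable_obs model.indep model.ident
      (measurable_zObs η p.1 p.2) (measurable_zObs η q.1 q.2) (fun i => model.memLp_Zvec p.1 i p.2)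
      (fun i => model.memLp_Zvec q.1 i q.2) (fun i => model.integral_Zvec p.1 i p.2) ⟨0, hn⟩
    rwa [Fintype.card_fin] at h
  have hquad := integral_sum_mul_sq_of_indepFun (indepFun_fin_two_of_prod hAindep)
    (f := fun (p : Fin 2 × Fin d) (a : Fin 2 → Fin d → ℝ) => a p.1 p.2 - β p.1 p.2)
    (g := fun p D => ∑ i, zObs η p.1 p.2 (D i)) (fun p => by fun_prop)
    (fun p => measurable_sum_zObs η p.1 p.2) (fun p => (hAL2 p.1 p.2).sub (memLp_const _))
    (fun p => model.memLp_sum_zObs p.1 p.2)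
  have hn' : (n : ℝ) ≠ 0 := by positivity
  refine Eq.trans ?_ (sum_ite_mul_eq_trace V C fun p q =>
    integral_congr_ae (ae_of_all _ fun ω => mul_comm _ _))
  simp_rw [Rrem_eq_sum η X W ε A β, mul_pow]
  rw [integral_const_mul, hquad]
  simp only [hSS, integral_centered_mul_centered hAL2 hAmean hV hAcross,
    mul_left_comm _ (n : ℝ), ← Finset.mul_sum]
  field_simp

lemma aipwOracle_eq (model : LogisticSelectionModel P n d S μX η β σ2 X W ε Y) (ω : Ω) :
    aipwOracle η X W Y β ω = (n : ℝ)⁻¹ * ∑ i, aipwObs η β (X i ω, W i ω, ε i ω) := by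
  simp only [aipwOracle, aipwObs, aipwWeight, model.Ydef, add_sub_cancel_left]

end LogisticSelectionModel

theorem stmt11_general (P : Measure Ω) (n d : ℕ) (hn : 0 < n)
    (S : Matrix (Fin d) (Fin d) ℝ) (η : Fin d → ℝ) (β : Fin 2 → Fin d → ℝ)
    (σ2 : ℝ) (X : Fin n → Ω → Fin d → ℝ) (W : Fin n → Ω → Fin 2)
    (ε : Fin n → Ω → ℝ) (Y : Fin n → Ω → ℝ)
    (model : LogisticSelectionModel P n d S 0 η β σ2 X W ε Y)
    (A : Fin 2 → Ω → Fin d → ℝ)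
    (hAL2 : ∀ w j, MemLp (fun ω => A w ω j) 2 P)
    -- `(A 0, A 1)` is independent of the data `{(X i, W i, ε i)}`:
    (hAindep : IndepFun (fun ω => (A 0 ω, A 1 ω))
      (fun ω (i : Fin n) => (X i ω, W i ω, ε i ω)) P)
    (hAmean : ∀ w j, ∫ ω, A w ω j ∂P = β w j)
    (V : Fin 2 → Matrix (Fin d) (Fin d) ℝ)
    (hV : ∀ w j k, V w j k = ∫ ω, A w ω j * A w ω k ∂P - β w j * β w k)
    (hAcross : ∀ j k, ∫ ω, A 1 ω j * A 0 ω k ∂P = β 1 j * β 0 k) :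
    (∀ (w : Fin 2) (i : Fin n) (j : Fin d),
      MemLp (fun ω => Zvec η X W w i ω j) 2 P ∧
      ∫ ω, Zvec η X W w i ω j ∂P = 0) ∧
    (∫ ω, Rrem η X W A β ω ∂P = 0) ∧
    ((∫ ω, (Real.sqrt n * Rrem η X W A β ω) ^ 2 ∂P)
        - (∫ ω, Real.sqrt n * Rrem η X W A β ω ∂P) ^ 2
      = (V 1 * Matrix.of (fun j k =>
            ∫ ω, Zvec η X W 1 ⟨0, hn⟩ ω j * Zvec η X W 1 ⟨0, hn⟩ ω k ∂P)).trace
        + (V 0 * Matrix.of (fun j k =>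
            ∫ ω, Zvec η X W 0 ⟨0, hn⟩ ω j * Zvec η X W 0 ⟨0, hn⟩ ω k ∂P)).trace) ∧
    (∫ ω, Rrem η X W A β ω * aipwOracle η X W Y β ω ∂P = 0) := by
  have := model.prob
  have hmean : ∫ ω, Rrem η X W A β ω ∂P = 0 := by
    simpa using model.integral_Rrem_mul_eq_zero hAL2 hAindep hAmean (u := fun _ => 1)
      measurable_const (memLp_const 1)
  refine ⟨fun w i j => ⟨model.memLp_Zvec w i j, model.integral_Zvec w i j⟩, hmean, ?_, ?_⟩
  · simp_rw [mul_pow, Real.sq_sqrt (Nat.cast_nonneg n)]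
    rw [integral_const_mul, integral_const_mul, hmean, mul_zero, zero_pow two_ne_zero, sub_zero]
    exact model.mul_integral_Rrem_sq hn hAL2 hAindep hAmean hV hAcross
  · simp_rw [model.aipwOracle_eq]
    exact model.integral_Rrem_mul_eq_zero hAL2 hAindep hAmean ((Finset.measurable_sum _ fun i _ =>
      (measurable_aipwObs η β).comp (measurable_pi_apply i)).const_mul _)
      ((memLp_finsetSum _ fun i _ => model.memLp_aipwObs i).const_mul _)

/-- in the logistic-selection Gaussian linear model with mean-zero
covariates and known propensity `π(x) = σ(ηᵀx)`, the vectors `Z¹ i, Z⁰ i` have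
mean zero and finite second moments; and for random vectors `A 0, A 1`
independent of the data, square integrable, with means `β 0, β 1`, covariances
`V 0, V 1` and vanishing cross-covariance, the remainder `R` satisfies
(i) `E[R] = 0`; (ii) `Var(√n R) = trace(V 1 Σ_{Z¹}) + trace(V 0 Σ_{Z⁰})`;
(iii) `E[R θ̂_or] = 0`, i.e. `R` and the oracle AIPW estimator are uncorrelated. -/
theorem stmt11 (P : Measure Ω) (n d : ℕ) (hn : 0 < n)
    (S : Matrix (Fin d) (Fin d) ℝ) (η : Fin d → ℝ) (β : Fin 2 → Fin d → ℝ)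
    (σ2 : ℝ) (X : Fin n → Ω → Fin d → ℝ) (W : Fin n → Ω → Fin 2)
    (ε : Fin n → Ω → ℝ) (Y : Fin n → Ω → ℝ)
    (model : LogisticSelectionModel P n d S 0 η β σ2 X W ε Y)
    (A : Fin 2 → Ω → Fin d → ℝ) (hAmeas : ∀ w, Measurable (A w))
    (hAL2 : ∀ w j, MemLp (fun ω => A w ω j) 2 P)
    -- `(A 0, A 1)` is independent of the data `{(X i, W i, ε i)}`:
    (hAindep : IndepFun (fun ω => (A 0 ω, A 1 ω))
      (fun ω (i : Fin n) => (X i ω, W i ω, ε i ω)) P)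
    (hAmean : ∀ w j, ∫ ω, A w ω j ∂P = β w j)
    (V : Fin 2 → Matrix (Fin d) (Fin d) ℝ)
    (hV : ∀ w j k, V w j k = ∫ ω, A w ω j * A w ω k ∂P - β w j * β w k)
    (hAcross : ∀ j k, ∫ ω, A 1 ω j * A 0 ω k ∂P = β 1 j * β 0 k) :
    (∀ (w : Fin 2) (i : Fin n) (j : Fin d),
      MemLp (fun ω => Zvec η X W w i ω j) 2 P ∧
      ∫ ω, Zvec η X W w i ω j ∂P = 0) ∧
    (∫ ω, Rrem η X W A β ω ∂P = 0) ∧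
    ((∫ ω, (Real.sqrt n * Rrem η X W A β ω) ^ 2 ∂P)
        - (∫ ω, Real.sqrt n * Rrem η X W A β ω ∂P) ^ 2
      = (V 1 * Matrix.of (fun j k =>
            ∫ ω, Zvec η X W 1 ⟨0, hn⟩ ω j * Zvec η X W 1 ⟨0, hn⟩ ω k ∂P)).trace
        + (V 0 * Matrix.of (fun j k =>
            ∫ ω, Zvec η X W 0 ⟨0, hn⟩ ω j * Zvec η X W 0 ⟨0, hn⟩ ω k ∂P)).trace) ∧
    (∫ ω, Rrem η X W A β ω * aipwOracle η X W Y β ω ∂P = 0) :=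
  stmt11_general P n d hn S η β σ2 X W ε Y model A hAL2 hAindep hAmean V hV hAcross
end

section
/- Let n_2 ≥ 1, and for i = 1, …, n_2 let W_i ∈ {0,1}, X_i ∈ ℝ^d, Y_i ∈ ℝ; let μ̂_0, μ̂_1 : ℝ^d → ℝ and π̂ : ℝ^d → (0,1). Assume ∑_i W_i/π̂(X_i)² > 0 and ∑_i (1−W_i)/(1−π̂(X_i))² > 0, and define ε̂_1 = (∑_i (W_i/π̂(X_i))(Y_i − μ̂_1(X_i)))/(∑_i W_i/π̂(X_i)²), ε̂_0 = (∑_i ((1−W_i)/(1−π̂(X_i)))(Y_i − μ̂_0(X_i)))/(∑_i (1−W_i)/(1−π̂(X_i))²), the updated regressions μ̄_1(x) = μ̂_1(x) + ε̂_1/π̂(x) and μ̄_0(x) = μ̂_0(x) + ε̂_0/(1−π̂(x)), and the TMLE τ̂ = (1/n_2) ∑_i (μ̄_1(X_i) − μ̄_0(X_i)). Then τ̂ = (1/n_2) ∑_i [ μ̂_1(X_i) − μ̂_0(X_i) ] + T¹ · (1/n_2) ∑_i (W_i/π̂(X_i))(Y_i − μ̂_1(X_i)) − T⁰ · (1/n_2)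 ∑_i ((1−W_i)/(1−π̂(X_i)))(Y_i − μ̂_0(X_i)), where T¹ = (∑_i 1/π̂(X_i))/(∑_i W_i/π̂(X_i)²) and T⁰ = (∑_i 1/(1−π̂(X_i)))/(∑_i (1−W_i)/(1−π̂(X_i))²). In particular, the TMLE equals an AIPW-type estimator whose residual terms are reweighted by the factors T¹ and T⁰. -/
/-- the TMLE for continuous outcomes, built from outcome
regressions `μ̂ 0, μ̂ 1` and propensity `π̂` via the least-squares fluctuation
step, equals an AIPW-type estimator whose residual terms are reweighted by the
factors `T¹ = (∑ 1/π̂(X i)) / (∑ W i/π̂(X i)²)` and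
`T⁰ = (∑ 1/(1-π̂(X i))) / (∑ (1-W i)/(1-π̂(X i))²)`. -/
theorem stmt13 (n2 d : ℕ) (hn : 1 ≤ n2)
    (W : Fin n2 → ℝ) (hW : ∀ i, W i = 0 ∨ W i = 1)
    (X : Fin n2 → Fin d → ℝ) (Y : Fin n2 → ℝ)
    (μ0 μ1 : (Fin d → ℝ) → ℝ) (πh : (Fin d → ℝ) → ℝ)
    (hπ : ∀ x, πh x ∈ Set.Ioo (0 : ℝ) 1)
    (h1 : 0 < ∑ i, W i / (πh (X i)) ^ 2)
    (h0 : 0 < ∑ i, (1 - W i) / (1 - πh (X i)) ^ 2)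
    (ε1 ε0 : ℝ)
    (hε1 : ε1 = (∑ i, (W i / πh (X i)) * (Y i - μ1 (X i)))
      / (∑ i, W i / (πh (X i)) ^ 2))
    (hε0 : ε0 = (∑ i, ((1 - W i) / (1 - πh (X i))) * (Y i - μ0 (X i)))
      / (∑ i, (1 - W i) / (1 - πh (X i)) ^ 2))
    (μb1 μb0 : (Fin d → ℝ) → ℝ)
    (hμb1 : ∀ x, μb1 x = μ1 x + ε1 / πh x)
    (hμb0 : ∀ x, μb0 x = μ0 x + ε0 / (1 - πh x)) :
    (n2 : ℝ)⁻¹ * ∑ i, (μb1 (X i) - μb0 (X i))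
      = (n2 : ℝ)⁻¹ * (∑ i, (μ1 (X i) - μ0 (X i)))
        + ((∑ i, 1 / πh (X i)) / (∑ i, W i / (πh (X i)) ^ 2))
          * ((n2 : ℝ)⁻¹ * ∑ i, (W i / πh (X i)) * (Y i - μ1 (X i)))
        - ((∑ i, 1 / (1 - πh (X i))) / (∑ i, (1 - W i) / (1 - πh (X i)) ^ 2))
          * ((n2 : ℝ)⁻¹ * ∑ i, ((1 - W i) / (1 - πh (X i))) * (Y i - μ0 (X i))) := by
  have hs1 : ∑ i, ε1 / πh (X i) = ε1 * ∑ i, 1 / πh (X i) := by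
    rw [Finset.mul_sum]; exact Finset.sum_congr rfl fun i _ => by rw [mul_one_div]
  have hs0 : ∑ i, ε0 / (1 - πh (X i)) = ε0 * ∑ i, 1 / (1 - πh (X i)) := by
    rw [Finset.mul_sum]; exact Finset.sum_congr rfl fun i _ => by rw [mul_one_div]
  have key : ∑ i, (μb1 (X i) - μb0 (X i))
      = ∑ i, (μ1 (X i) - μ0 (X i)) + ε1 * ∑ i, 1 / πh (X i)
        - ε0 * ∑ i, 1 / (1 - πh (X i)) := by
    simp only [hμb1, hμb0]
    rw [← hs1, ← hs0, ← Finset.sum_add_distrib, ← Finset.sum_sub_distrib]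
    exact Finset.sum_congr rfl fun i _ => by ring
  rw [key, hε1, hε0]
  field_simp
end
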